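/- Let G be a group and γ an anti-automorphism of G. Then G is chiral (there exists d and w ∈ F_d with G_w ≠ (G_w)⁻¹, equivalently G_w ≠ G_{w⁻¹}) if and only if G is γ-chiral (there exists d and w ∈ F_d with G_w ≠ γ(G_w)). -/

import Mathlib

/-! For an anti-automorphism `γ`, the map `x ↦ (γ x)⁻¹` is an automorphism, and surjective
homomorphisms map word images onto word images. Hence `γ '' G_w = (G_w)⁻¹ = G_{w⁻¹}`, so both
notions of chirality compare `G_w` with the same set. -/

/-- `f` is an anti-automorphism of the group `G`. -/
def IsAntiAut {G : Type*} [Group G] (f : G → G) : Prop :=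
  Function.Bijective f ∧ ∀ a b : G, f (a * b) = f b * f a

/-- The image of the word map of `w` on `G`. -/
def wordImage {d : ℕ} (G : Type*) [Group G] (w : FreeGroup (Fin d)) : Set G :=
  Set.range fun g : Fin d → G => (FreeGroup.lift g) w

open Function

lemma FreeGroup.lift_apply_comp {α G H : Type*} [Group G] [Group H] (f : G →* H) (g : α → G)
    (w : FreeGroup α) : f (FreeGroup.lift g w) = FreeGroup.lift (f ∘ g) w := by
  rw [← MonoidHom.comp_apply]
  congr 1
  ext
  simp

section

variable {G : Type*} [Group G] {d : ℕ}

lemma wordImage_inv (w : FreeGroup (Fin d)) : wordImage G w⁻¹ = Inv.inv '' wordImage G w := by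
  simp only [wordImage, map_inv, ← Set.range_comp']

lemma image_wordImage_of_surjective {H : Type*} [Group H] (f : G →* H) (hf : Surjective f)
    (w : FreeGroup (Fin d)) : f '' wordImage G w = wordImage H w := by
  simp only [wordImage, ← Set.range_comp', FreeGroup.lift_apply_comp]
  exact hf.comp_left.range_comp fun g : Fin d → H => FreeGroup.lift g w

namespace IsAntiAut

variable {γ : G → G}

def invHom (hγ : IsAntiAut γ) : G →* G :=
  MonoidHom.mk' (fun x => (γ x)⁻¹) fun a b => by rw [hγ.2, mul_inv_rev]

lemma invHom_surjective (hγ : IsAntiAut γ) : Surjective hγ.invHom :=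
  (inv_involutive.bijective.comp hγ.1).2

lemma image_wordImage (hγ : IsAntiAut γ) (w : FreeGroup (Fin d)) :
    γ '' wordImage G w = wordImage G w⁻¹ := by
  have hγ_eq : γ = Inv.inv ∘ hγ.invHom := funext fun x => (inv_inv (γ x)).symm
  rw [wordImage_inv, hγ_eq, Set.image_comp,
    image_wordImage_of_surjective _ hγ.invHom_surjective]

end IsAntiAut

end

theorem group_chiral_iff_gammaChiral (G : Type*) [Group G]
    (γ : G → G) (hγ : IsAntiAut γ) :
    (∃ (d : ℕ) (w : FreeGroup (Fin d)), wordImage G w ≠ wordImage G w⁻¹) ↔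
      (∃ (d : ℕ) (w : FreeGroup (Fin d)), wordImage G w ≠ γ '' wordImage G w) := by
  simp only [hγ.image_wordImage]
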